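/- arXiv:1303.6669 — 2 statements merged into one kernel-verified Lean document; each statement's English description precedes it below -/
import Mathlib

section
/- Let H be a real Hilbert space and let T : H → H be a nonexpansive mapping with Fix(T) ≠ ∅. Let (x_n), (y_n) be the Ishikawa iteration starting from any x_0 ∈ H. Then for every p ∈ Fix(T), the series ∑_{n=0}^∞ t_n (1 − t_n) ‖T(y_n) − x_n‖² converges and its sum is at most ‖x_0 − p‖². -/
open Filter

lemma convex_norm_sq_identity {H : Type*} [NormedAddCommGroup H] [InnerProductSpace ℝ H]
    (t : ℝ) (a b : H) :
    ‖(1 - t) • a + t • b‖ ^ 2 = (1 - t) * ‖a‖ ^ 2 + t * ‖b‖ ^ 2 - t * (1 - t) * ‖a - b‖ ^ 2 := by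
  have h : ∀ v : H, ‖v‖ ^ 2 = inner ℝ v v := fun v => (real_inner_self_eq_norm_sq v).symm
  simp only [h, inner_add_left, inner_add_right, inner_sub_left, inner_sub_right,
    real_inner_smul_left, real_inner_smul_right, real_inner_comm b a]
  ring

theorem stmt_8 (H : Type*) [NormedAddCommGroup H] [InnerProductSpace ℝ H] [CompleteSpace H]
    (T : H → H) (hT : ∀ x y : H, ‖T x - T y‖ ≤ ‖x - y‖)
    (hF : ∃ p : H, T p = p)
    (t s : ℕ → ℝ) (ht : ∀ n, t n ∈ Set.Icc (0:ℝ) 1) (hs : ∀ n, s n ∈ Set.Icc (0:ℝ) 1)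
    (x y : ℕ → H)
    (hy : ∀ n, y n = (1 - s n) • x n + s n • T (x n))
    (hx : ∀ n, x (n + 1) = (1 - t n) • x n + t n • T (y n)) :
    ∀ p : H, T p = p → Summable (fun n => t n * (1 - t n) * ‖T (y n) - x n‖ ^ 2) ∧ ∑' n, t n * (1 - t n) * ‖T (y n) - x n‖ ^ 2 ≤ ‖x 0 - p‖ ^ 2 := by
  intro p hp
  -- each term is nonnegative
  have hnonneg : ∀ n, 0 ≤ t n * (1 - t n) * ‖T (y n) - x n‖ ^ 2 := fun n => by
    have h1 := (ht n).1; have h2 := (ht n).2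
    have h3 : 0 ≤ ‖T (y n) - x n‖ ^ 2 := sq_nonneg _
    have h4 : 0 ≤ t n * (1 - t n) := mul_nonneg h1 (by linarith)
    exact mul_nonneg h4 h3
  -- key one-step inequality
  have hstep : ∀ n, t n * (1 - t n) * ‖T (y n) - x n‖ ^ 2
      ≤ ‖x n - p‖ ^ 2 - ‖x (n + 1) - p‖ ^ 2 := by
    intro n
    have ht0 := (ht n).1; have ht1 := (ht n).2
    have hs0 := (hs n).1; have hs1 := (hs n).2
    -- ‖y n - p‖ ≤ ‖x n - p‖
    have hyp : ‖y n - p‖ ≤ ‖x n - p‖ := by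
      have hrw : y n - p = (1 - s n) • (x n - p) + s n • (T (x n) - p) := by
        rw [hy n]; module
      calc ‖y n - p‖ ≤ ‖(1 - s n) • (x n - p)‖ + ‖s n • (T (x n) - p)‖ := by
            rw [hrw]; exact norm_add_le _ _
        _ = (1 - s n) * ‖x n - p‖ + s n * ‖T (x n) - p‖ := by
            rw [norm_smul, norm_smul, Real.norm_eq_abs, Real.norm_eq_abs,
              abs_of_nonneg (by linarith), abs_of_nonneg hs0]
        _ ≤ (1 - s n) * ‖x n - p‖ + s n * ‖x n - p‖ := by
            have := hT (x n) p
            rw [hp] at this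
            nlinarith [norm_nonneg (x n - p)]
        _ = ‖x n - p‖ := by ring
    have hTyp : ‖T (y n) - p‖ ≤ ‖x n - p‖ := by
      have := hT (y n) p; rw [hp] at this; linarith
    have hrw : x (n + 1) - p = (1 - t n) • (x n - p) + t n • (T (y n) - p) := by
      rw [hx n]; module
    have hid := convex_norm_sq_identity (t n) (x n - p) (T (y n) - p)
    rw [← hrw] at hid
    have hdiff : (x n - p) - (T (y n) - p) = -(T (y n) - x n) := by abel
    rw [hdiff, norm_neg] at hid
    have hsq : ‖T (y n) - p‖ ^ 2 ≤ ‖x n - p‖ ^ 2 := by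
      nlinarith [norm_nonneg (T (y n) - p)]
    nlinarith
  -- partial sums bounded
  have hpart : ∀ N, ∑ n ∈ Finset.range N, t n * (1 - t n) * ‖T (y n) - x n‖ ^ 2
      ≤ ‖x 0 - p‖ ^ 2 := by
    intro N
    have htel : ∑ n ∈ Finset.range N, (‖x n - p‖ ^ 2 - ‖x (n + 1) - p‖ ^ 2)
        = ‖x 0 - p‖ ^ 2 - ‖x N - p‖ ^ 2 := by
      induction N with
      | zero => simp
      | succ k ih => rw [Finset.sum_range_succ, ih]; ring
    calc ∑ n ∈ Finset.range N, t n * (1 - t n) * ‖T (y n) - x n‖ ^ 2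
        ≤ ∑ n ∈ Finset.range N, (‖x n - p‖ ^ 2 - ‖x (n + 1) - p‖ ^ 2) :=
          Finset.sum_le_sum fun n _ => hstep n
      _ = ‖x 0 - p‖ ^ 2 - ‖x N - p‖ ^ 2 := htel
      _ ≤ ‖x 0 - p‖ ^ 2 := by nlinarith [norm_nonneg (x N - p)]
  have hsum : Summable (fun n => t n * (1 - t n) * ‖T (y n) - x n‖ ^ 2) :=
    summable_of_sum_range_le hnonneg hpart
  exact ⟨hsum, Summable.tsum_le_of_sum_range_le hsum hpart⟩
end

section
/- Let H be a real Hilbert space and let T : H → H be a nonexpansive mapping with Fix(T) ≠ ∅. Suppose the sequence (t_n) in [0,1] satisfies ∑_{n=0}^∞ t_n (1 − t_n) = ∞. Let x_0 ∈ H and define the Mann iteration by x_{n+1} = (1 − t_n) x_n + t_n T(x_n) for n ≥ 0. Then (x_n) converges weakly to a point of Fix(T). -/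
open Filter
open scoped RealInnerProductSpace

private lemma combo_sq {H : Type*} [NormedAddCommGroup H] [InnerProductSpace ℝ H]
    (a b : H) (s : ℝ) :
    ‖(1-s)•a + s•b‖^2 = (1-s)*‖a‖^2 + s*‖b‖^2 - s*(1-s)*‖a-b‖^2 := by
  have h : ∀ v : H, ‖v‖^2 = ⟪v,v⟫ := fun v => (real_inner_self_eq_norm_sq v).symm
  rw [h, h, h, h]
  simp only [inner_add_left, inner_add_right, inner_sub_left, inner_sub_right,
    real_inner_smul_left, real_inner_smul_right, real_inner_comm a b]
  ring

private lemma ultra_lim (f : ℕ → ℝ) (M : ℝ) (hf : ∀ n, |f n| ≤ M) (U : Ultrafilter ℕ) :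
    ∃ a, Tendsto f U (nhds a) := by
  have hc : IsCompact (Set.Icc (-M) M) := isCompact_Icc
  obtain ⟨a, -, ha⟩ := hc.ultrafilter_le_nhds (U.map f) (by
    rw [Ultrafilter.coe_map]
    refine le_principal_iff.2 (Filter.mem_map.2 (Filter.univ_mem' fun n => abs_le.1 (hf n))))
  refine ⟨a, ?_⟩
  rwa [Tendsto, ← Ultrafilter.coe_map]

theorem stmt_17 (H : Type*) [NormedAddCommGroup H] [InnerProductSpace ℝ H] [CompleteSpace H]
    (T : H → H) (hT : ∀ x y : H, ‖T x - T y‖ ≤ ‖x - y‖)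
    (hF : ∃ p : H, T p = p)
    (t : ℕ → ℝ) (ht : ∀ n, t n ∈ Set.Icc (0:ℝ) 1)
    (hdiv : Tendsto (fun N => ∑ n ∈ Finset.range N, t n * (1 - t n)) atTop atTop)
    (x : ℕ → H)
    (hx : ∀ n, x (n + 1) = (1 - t n) • x n + t n • T (x n)) :
    ∃ q : H, T q = q ∧ ∀ v : H, Tendsto (fun n => ⟪x n, v⟫) atTop (nhds ⟪q, v⟫) := by
  obtain ⟨p, hp⟩ := hF
  have ht0 : ∀ n, 0 ≤ t n := fun n => (ht n).1
  have ht1 : ∀ n, t n ≤ 1 := fun n => (ht n).2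
  -- distances to fixed points are nonincreasing
  have hdist : ∀ r : H, T r = r → ∀ n, ‖x (n+1) - r‖ ≤ ‖x n - r‖ := by
    intro r hr n
    have heq : x (n+1) - r = (1 - t n) • (x n - r) + t n • (T (x n) - r) := by
      rw [hx n]; module
    rw [heq]
    calc ‖(1 - t n) • (x n - r) + t n • (T (x n) - r)‖
        ≤ ‖(1 - t n) • (x n - r)‖ + ‖t n • (T (x n) - r)‖ := norm_add_le _ _
      _ = (1 - t n) * ‖x n - r‖ + t n * ‖T (x n) - r‖ := by
          rw [norm_smul, norm_smul, Real.norm_eq_abs, Real.norm_eq_abs,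
            abs_of_nonneg (by linarith [ht1 n]), abs_of_nonneg (ht0 n)]
      _ ≤ (1 - t n) * ‖x n - r‖ + t n * ‖x n - r‖ := by
          have h1 : ‖T (x n) - r‖ ≤ ‖x n - r‖ := by
            have := hT (x n) r; rwa [hr] at this
          nlinarith [ht0 n]
      _ = ‖x n - r‖ := by ring
  have hdistle : ∀ r : H, T r = r → ∀ n, ‖x n - r‖ ≤ ‖x 0 - r‖ := by
    intro r hr
    exact fun n => antitone_nat_of_succ_le (f := fun n => ‖x n - r‖) (hdist r hr) (Nat.zero_le n)
  set M : ℝ := ‖x 0 - p‖ + ‖p‖ with hM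
  have hbdd : ∀ n, ‖x n‖ ≤ M := by
    intro n
    calc ‖x n‖ = ‖(x n - p) + p‖ := by rw [sub_add_cancel]
      _ ≤ ‖x n - p‖ + ‖p‖ := norm_add_le _ _
      _ ≤ M := by have := hdistle p hp n; rw [hM]; linarith
  -- key inequality
  have hkey : ∀ n, ‖x (n+1) - p‖^2 ≤ ‖x n - p‖^2 - t n * (1 - t n) * ‖x n - T (x n)‖^2 := by
    intro n
    have heq : x (n+1) - p = (1 - t n) • (x n - p) + t n • (T (x n) - p) := by
      rw [hx n]; module
    rw [heq, combo_sq]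
    have hab : (x n - p) - (T (x n) - p) = x n - T (x n) := by abel
    rw [hab]
    have hTle : ‖T (x n) - p‖ ≤ ‖x n - p‖ := by
      have := hT (x n) p; rwa [hp] at this
    have h2 : ‖T (x n) - p‖^2 ≤ ‖x n - p‖^2 := pow_le_pow_left₀ (norm_nonneg _) hTle 2
    nlinarith [ht0 n]
  -- summability
  have hsum : ∀ N, ∑ n ∈ Finset.range N, t n * (1 - t n) * ‖x n - T (x n)‖^2 ≤ ‖x 0 - p‖^2 := by
    intro N
    have h1 : ∑ n ∈ Finset.range N, t n * (1 - t n) * ‖x n - T (x n)‖^2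
        ≤ ∑ n ∈ Finset.range N, (‖x n - p‖^2 - ‖x (n+1) - p‖^2) := by
      refine Finset.sum_le_sum fun n _ => ?_
      have := hkey n; linarith
    rw [Finset.sum_range_sub' (fun n => ‖x n - p‖^2)] at h1
    have h2 : (0:ℝ) ≤ ‖x N - p‖^2 := sq_nonneg _
    linarith
  -- residuals are nonincreasing
  have hc_anti : ∀ n, ‖x (n+1) - T (x (n+1))‖ ≤ ‖x n - T (x n)‖ := by
    intro n
    have h1 : T (x n) - x (n+1) = (1 - t n) • (T (x n) - x n) := by
      rw [hx n]; module
    have h2 : x (n+1) - x n = t n • (T (x n) - x n) := by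
      rw [hx n]; module
    calc ‖x (n+1) - T (x (n+1))‖ = ‖T (x (n+1)) - x (n+1)‖ := norm_sub_rev _ _
      _ = ‖(T (x (n+1)) - T (x n)) + (T (x n) - x (n+1))‖ := by abel_nf
      _ ≤ ‖T (x (n+1)) - T (x n)‖ + ‖T (x n) - x (n+1)‖ := norm_add_le _ _
      _ ≤ ‖x (n+1) - x n‖ + ‖T (x n) - x (n+1)‖ := by linarith [hT (x (n+1)) (x n)]
      _ = t n * ‖T (x n) - x n‖ + (1 - t n) * ‖T (x n) - x n‖ := by
          rw [h1, h2, norm_smul, norm_smul, Real.norm_eq_abs, Real.norm_eq_abs,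
            abs_of_nonneg (ht0 n), abs_of_nonneg (by linarith [ht1 n])]
      _ = ‖x n - T (x n)‖ := by rw [norm_sub_rev]; ring
  -- asymptotic regularity
  have hc0 : Tendsto (fun n => ‖x n - T (x n)‖) atTop (nhds 0) := by
    have hanti : Antitone (fun n => ‖x n - T (x n)‖) := antitone_nat_of_succ_le hc_anti
    have hbb : BddBelow (Set.range fun n => ‖x n - T (x n)‖) :=
      ⟨0, fun y ⟨n, hn⟩ => hn ▸ norm_nonneg _⟩
    have hinf := tendsto_atTop_ciInf hanti hbb
    set L := ⨅ n, ‖x n - T (x n)‖ with hL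
    have hL0 : 0 ≤ L := le_ciInf fun n => norm_nonneg _
    rcases eq_or_lt_of_le hL0 with h | h
    · rwa [← h] at hinf
    · exfalso
      have hLle : ∀ n, L ≤ ‖x n - T (x n)‖ := fun n => ciInf_le hbb n
      have hbound : ∀ N, L^2 * (∑ n ∈ Finset.range N, t n * (1 - t n)) ≤ ‖x 0 - p‖^2 := by
        intro N
        calc L^2 * (∑ n ∈ Finset.range N, t n * (1 - t n))
            = ∑ n ∈ Finset.range N, t n * (1 - t n) * L^2 := by
              rw [Finset.mul_sum]; exact Finset.sum_congr rfl fun n _ => by ring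
          _ ≤ ∑ n ∈ Finset.range N, t n * (1 - t n) * ‖x n - T (x n)‖^2 := by
              refine Finset.sum_le_sum fun n _ => ?_
              have h1 : L^2 ≤ ‖x n - T (x n)‖^2 := pow_le_pow_left₀ hL0 (hLle n) 2
              have h2 : 0 ≤ t n * (1 - t n) := mul_nonneg (ht0 n) (by linarith [ht1 n])
              nlinarith
          _ ≤ ‖x 0 - p‖^2 := hsum N
      obtain ⟨N, hN⟩ := (hdiv.eventually_ge_atTop (‖x 0 - p‖^2 / L^2 + 1)).exists
      have hL2 : 0 < L^2 := by positivity
      have hb := hbound N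
      have hfld : L^2 * (‖x 0 - p‖^2 / L^2) = ‖x 0 - p‖^2 := by field_simp
      nlinarith [mul_le_mul_of_nonneg_left hN hL2.le]
  -- limits of distances to fixed points exist
  have hlim : ∀ r : H, T r = r → ∃ d, Tendsto (fun n => ‖x n - r‖) atTop (nhds d) := by
    intro r hr
    exact ⟨_, tendsto_atTop_ciInf (antitone_nat_of_succ_le (hdist r hr))
      ⟨0, fun y ⟨n, hn⟩ => hn ▸ norm_nonneg _⟩⟩
  -- each ultrafilter extending atTop gives a weak limit which is a fixed point
  have hU : ∀ U : Ultrafilter ℕ, (U : Filter ℕ) ≤ atTop →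
      ∃ q : H, T q = q ∧ ∀ v : H, Tendsto (fun n => ⟪x n, v⟫) ↑U (nhds ⟪q, v⟫) := by
    intro U hUle
    have hex : ∀ v : H, ∃ a, Tendsto (fun n => ⟪x n, v⟫) ↑U (nhds a) := by
      intro v
      refine ultra_lim _ (M * ‖v‖) (fun n => ?_) U
      calc |⟪x n, v⟫| ≤ ‖x n‖ * ‖v‖ := abs_real_inner_le_norm _ _
        _ ≤ M * ‖v‖ := mul_le_mul_of_nonneg_right (hbdd n) (norm_nonneg v)
    choose φ hφ using hex
    have hadd : ∀ v w : H, φ (v + w) = φ v + φ w := by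
      intro v w
      refine tendsto_nhds_unique (hφ (v+w)) ?_
      have h1 := (hφ v).add (hφ w)
      simpa [inner_add_right] using h1
    have hsmul : ∀ (c : ℝ) (v : H), φ (c • v) = c * φ v := by
      intro c v
      refine tendsto_nhds_unique (hφ (c • v)) ?_
      have h1 := (hφ v).const_mul c
      simpa [inner_smul_right] using h1
    have hbnd : ∀ v : H, ‖φ v‖ ≤ M * ‖v‖ := by
      intro v
      rw [Real.norm_eq_abs]
      refine le_of_tendsto (hφ v).abs (Filter.Eventually.of_forall fun n => ?_)
      calc |⟪x n, v⟫| ≤ ‖x n‖ * ‖v‖ := abs_real_inner_le_norm _ _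
        _ ≤ M * ‖v‖ := mul_le_mul_of_nonneg_right (hbdd n) (norm_nonneg v)
    let φL : H →ₗ[ℝ] ℝ := { toFun := φ, map_add' := hadd, map_smul' := hsmul }
    let φC : H →L[ℝ] ℝ := φL.mkContinuousOfExistsBound ⟨M, hbnd⟩
    set q : H := (InnerProductSpace.toDual ℝ H).symm φC with hqdef
    have hqv : ∀ v : H, ⟪q, v⟫ = φ v := fun v =>
      InnerProductSpace.toDual_symm_apply (𝕜 := ℝ) (E := H) (y := φC) (x := v)
    have hweak : ∀ v : H, Tendsto (fun n => ⟪x n, v⟫) ↑U (nhds ⟪q, v⟫) := by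
      intro v; rw [hqv v]; exact hφ v
    -- demiclosedness: q is a fixed point
    set w : H := q - T q with hw
    have hxw : Tendsto (fun n => ⟪x n - q, w⟫) ↑U (nhds 0) := by
      have h1 := (hweak w).sub_const ⟪q, w⟫
      simpa [inner_sub_left] using h1
    have hbq : ∀ n, |‖x n - q‖| ≤ M + ‖q‖ := by
      intro n
      rw [abs_of_nonneg (norm_nonneg _)]
      calc ‖x n - q‖ ≤ ‖x n‖ + ‖q‖ := norm_sub_le _ _
        _ ≤ M + ‖q‖ := by linarith [hbdd n]
    obtain ⟨ℓ, hℓ⟩ := ultra_lim (fun n => ‖x n - q‖) (M + ‖q‖) hbq U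
    have hA : Tendsto (fun n => ‖x n - T q‖^2) ↑U (nhds (ℓ^2 + ‖w‖^2)) := by
      have heq : ∀ n, ‖x n - T q‖^2 = ‖x n - q‖^2 + 2*⟪x n - q, w⟫ + ‖w‖^2 := by
        intro n
        have h3 : x n - T q = (x n - q) + w := by rw [hw]; abel
        rw [h3, norm_add_sq_real]
      simp_rw [heq]
      have h4 : Tendsto (fun n => ‖x n - q‖^2) ↑U (nhds (ℓ^2)) := hℓ.pow 2
      have h5 := (h4.add (hxw.const_mul 2)).add (tendsto_const_nhds (x := ‖w‖^2))
      simpa using h5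
    have hB : Tendsto (fun n => (‖x n - T (x n)‖ + ‖x n - q‖)^2) ↑U (nhds (ℓ^2)) := by
      have h6 := ((hc0.mono_left hUle).add hℓ).pow 2
      simpa using h6
    have hle2 : ℓ^2 + ‖w‖^2 ≤ ℓ^2 := by
      refine le_of_tendsto_of_tendsto' hA hB fun n => ?_
      have h7 : ‖x n - T q‖ ≤ ‖x n - T (x n)‖ + ‖x n - q‖ := by
        calc ‖x n - T q‖ = ‖(x n - T (x n)) + (T (x n) - T q)‖ := by abel_nf
          _ ≤ ‖x n - T (x n)‖ + ‖T (x n) - T q‖ := norm_add_le _ _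
          _ ≤ ‖x n - T (x n)‖ + ‖x n - q‖ := by linarith [hT (x n) q]
      exact pow_le_pow_left₀ (norm_nonneg _) h7 2
    have hw0 : w = 0 := by
      have h8 : ‖w‖ ≤ 0 := by nlinarith [norm_nonneg w]
      exact norm_eq_zero.1 (le_antisymm h8 (norm_nonneg w))
    exact ⟨q, (sub_eq_zero.1 hw0).symm, hweak⟩
  -- assemble
  obtain ⟨U₀, hU₀⟩ := exists_ultrafilter_le (atTop : Filter ℕ)
  obtain ⟨q, hq, hqw⟩ := hU U₀ hU₀
  refine ⟨q, hq, fun v => ?_⟩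
  rw [tendsto_iff_ultrafilter]
  intro U hUle
  obtain ⟨q', hq', hq'w⟩ := hU U hUle
  have hqq : q' = q := by
    obtain ⟨d, hd⟩ := hlim q hq
    obtain ⟨d', hd'⟩ := hlim q' hq'
    have hformula : ∀ n, ⟪x n, q - q'⟫ = (‖x n - q'‖^2 - ‖x n - q‖^2 - ‖q'‖^2 + ‖q‖^2)/2 := by
      intro n
      have e1 : ‖x n - q‖^2 = ‖x n‖^2 - 2*⟪x n, q⟫ + ‖q‖^2 := norm_sub_sq_real _ _
      have e2 : ‖x n - q'‖^2 = ‖x n‖^2 - 2*⟪x n, q'⟫ + ‖q'‖^2 := norm_sub_sq_real _ _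
      rw [inner_sub_right]
      linarith
    have hβ : Tendsto (fun n => ⟪x n, q - q'⟫) atTop
        (nhds ((d'^2 - d^2 - ‖q'‖^2 + ‖q‖^2)/2)) := by
      simp_rw [hformula]
      exact ((((hd'.pow 2).sub (hd.pow 2)).sub_const (‖q'‖^2)).add_const (‖q‖^2)).div_const 2
    have l1 : ⟪q, q - q'⟫ = (d'^2 - d^2 - ‖q'‖^2 + ‖q‖^2)/2 :=
      tendsto_nhds_unique (hqw (q - q')) (hβ.mono_left hU₀)
    have l2 : ⟪q', q - q'⟫ = (d'^2 - d^2 - ‖q'‖^2 + ‖q‖^2)/2 :=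
      tendsto_nhds_unique (hq'w (q - q')) (hβ.mono_left hUle)
    have h9 : ⟪q - q', q - q'⟫ = 0 := by rw [inner_sub_left, l1, l2]; ring
    have h10 : q - q' = 0 := inner_self_eq_zero.1 h9
    exact (sub_eq_zero.1 h10).symm
  rw [← hqq]
  exact hq'w v
end
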